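/- The spaces ℓᵖ (1 ≤ p ≤ ∞), regarded as linear subspaces of ℝ^ω with the subspace topology induced by the product-topology metric d(x,y) = Σᵢ min{|xᵢ−yᵢ|,1}/2ⁱ, have the Lebesgue property: every function f : [a,b] → ℓᵖ that is Riemann integrable with respect to the induced metric d is continuous (for d) almost everywhere. -/

import Mathlib

open Set MeasureTheory

/-- A tagged partition of `[a,b]`: points `a = t 0 < t 1 < ⋯ < t n = b`
with tags `s i ∈ [t i, t (i+1)]`. -/
structure TaggedPartition (a b : ℝ) where
  n : ℕ
  t : ℕ → ℝ
  s : ℕ → ℝ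
  npos : 0 < n
  left : t 0 = a
  right : t n = b
  mono : ∀ i < n, t i < t (i + 1)
  tag_mem : ∀ i < n, s i ∈ Set.Icc (t i) (t (i + 1))

/-- The mesh of the partition is `< δ`. -/
def TaggedPartition.MeshLT {a b : ℝ} (P : TaggedPartition a b) (δ : ℝ) : Prop :=
  ∀ i < P.n, P.t (i + 1) - P.t i < δ

/-- The set of partition points of a tagged partition. -/
def TaggedPartition.points {a b : ℝ} (P : TaggedPartition a b) : Set ℝ :=
  {x | ∃ i ≤ P.n, P.t i = x}

/-- The Riemann sum `f(Δ) = Σᵢ (tᵢ₊₁ - tᵢ) • f(sᵢ)`. -/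
def riemannSum {X : Type*} [AddCommGroup X] [Module ℝ X]
    (f : ℝ → X) {a b : ℝ} (P : TaggedPartition a b) : X :=
  ∑ i ∈ Finset.range P.n, (P.t (i + 1) - P.t i) • f (P.s i)

/-- `f` has Riemann integral `x` on `[a,b]` (mesh-based definition, metric `dist`). -/
def HasRiemannIntegral {X : Type*} [MetricSpace X] [AddCommGroup X] [Module ℝ X]
    (f : ℝ → X) (a b : ℝ) (x : X) : Prop :=
  ∀ ε > 0, ∃ δ > 0, ∀ P : TaggedPartition a b, P.MeshLT δ →
    dist (riemannSum f P) x < ε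

/-- The product metric on `ℝ^ω = ℕ → ℝ`: `d(x,y) = Σ_{i≥1} min{|xᵢ−yᵢ|,1}/2ⁱ`
(indices shifted so that `ℕ` starts at `0`). It induces the product topology. -/
noncomputable def dOmega (x y : ℕ → ℝ) : ℝ :=
  ∑' i : ℕ, min |x i - y i| 1 / 2 ^ (i + 1)

/-- Riemann integrability in `(ℝ^ω, dOmega)`. -/
def HasRiemannIntegralD (f : ℝ → ℕ → ℝ) (a b : ℝ) (x : ℕ → ℝ) : Prop :=
  ∀ ε > 0, ∃ δ > 0, ∀ P : TaggedPartition a b, P.MeshLT δ →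
    dOmega (riemannSum f P) x < ε

/-- Continuity at `t` within `S` with respect to `dOmega`. -/
def ContinuousWithinAtD (f : ℝ → ℕ → ℝ) (S : Set ℝ) (t : ℝ) : Prop :=
  ∀ ε > 0, ∃ δ > 0, ∀ s ∈ S, |s - t| < δ → dOmega (f s) (f t) < ε

/-! Convergence for `dOmega` is coordinatewise convergence. Hence every coordinate of a
`dOmega`-Riemann integrable `f` is a real Riemann integrable function, and `f` is
`dOmega`-continuous wherever all its coordinates are continuous, so the discontinuity set of `f`
is a countable union of discontinuity sets of real Riemann integrable functions. Each of those is
null by Lebesgue's criterion: if the points of oscillation `≥ q` meet the interiors of intervals of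
total length `L` in a fine partition, retagging these intervals at points where the values differ
by `q` moves the Riemann sum by at least `q * L`, while fine Riemann sums are all close. -/

open Filter Topology Finset

lemma dOmega_term_le (x y : ℕ → ℝ) (i : ℕ) : min |x i - y i| 1 / 2 ^ (i + 1) ≤ (1 / 2) ^ i := by
  calc min |x i - y i| 1 / 2 ^ (i + 1) ≤ 1 / 2 ^ (i + 1) := by gcongr; exact min_le_right _ _
    _ ≤ 1 / 2 ^ i := by gcongr <;> norm_num
    _ = (1 / 2) ^ i := (one_div_pow 2 i).symm

lemma summable_dOmega_term (x y : ℕ → ℝ) :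
    Summable fun i => min |x i - y i| 1 / 2 ^ (i + 1) :=
  summable_geometric_two.of_nonneg_of_le (fun _ => by positivity) (dOmega_term_le x y)

lemma dOmega_term_le_dOmega (x y : ℕ → ℝ) (i : ℕ) :
    min |x i - y i| 1 / 2 ^ (i + 1) ≤ dOmega x y :=
  (summable_dOmega_term x y).le_tsum i fun _ _ => by positivity

lemma abs_sub_lt_of_dOmega_lt {x y : ℕ → ℝ} {i : ℕ} {ε : ℝ}
    (h : dOmega x y < min ε 1 / 2 ^ (i + 1)) : |x i - y i| < ε := by
  have hmin : min |x i - y i| 1 < min ε 1 :=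
    (div_lt_div_iff_of_pos_right (by positivity)).mp ((dOmega_term_le_dOmega x y i).trans_lt h)
  by_contra! hε
  exact (min_le_min_right 1 hε).not_gt hmin

lemma tendsto_dOmega_zero {α : Type*} {l : Filter α} {g : α → ℕ → ℝ} {x : ℕ → ℝ}
    (h : Tendsto g l (𝓝 x)) : Tendsto (fun a => dOmega (g a) x) l (𝓝 0) := by
  have hterm (i : ℕ) : Tendsto (fun a => min |g a i - x i| 1 / 2 ^ (i + 1)) l
      (𝓝 (min |x i - x i| 1 / 2 ^ (i + 1))) :=
    (((((continuous_apply i).tendsto x).comp h).sub_const (x i)).abs.min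
      tendsto_const_nhds).div_const _
  have hbound : ∀ᶠ a in l, ∀ i, ‖min |g a i - x i| 1 / 2 ^ (i + 1)‖ ≤ (1 / 2) ^ i :=
    Eventually.of_forall fun a i => by
      rw [Real.norm_of_nonneg (by positivity)]; exact dOmega_term_le _ _ i
  simpa [dOmega] using tendsto_tsum_of_dominated_convergence summable_geometric_two hterm hbound

lemma continuousWithinAtD_of_continuousWithinAt {f : ℝ → ℕ → ℝ} {S : Set ℝ} {t : ℝ}
    (h : ContinuousWithinAt f S t) : ContinuousWithinAtD f S t := by
  intro ε hε
  obtain ⟨δ, hδ, hball⟩ :=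
    Metric.mem_nhdsWithin_iff.mp ((tendsto_dOmega_zero h).eventually (gt_mem_nhds hε))
  exact ⟨δ, hδ, fun s hs hst => hball ⟨by rwa [Metric.mem_ball, Real.dist_eq], hs⟩⟩

lemma riemannSum_apply {ι : Type*} (f : ℝ → ι → ℝ) {a b : ℝ} (P : TaggedPartition a b) (i : ι) :
    riemannSum f P i = riemannSum (fun t => f t i) P := by
  simp [riemannSum, Finset.sum_apply]

lemma HasRiemannIntegralD.hasRiemannIntegral_apply {f : ℝ → ℕ → ℝ} {a b : ℝ} {x : ℕ → ℝ}
    (hf : HasRiemannIntegralD f a b x) (i : ℕ) :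
    HasRiemannIntegral (fun t => f t i) a b (x i) := by
  intro ε hε
  obtain ⟨δ, hδ, hP⟩ := hf (min ε 1 / 2 ^ (i + 1)) (by positivity)
  exact ⟨δ, hδ, fun P hmesh => by
    rw [Real.dist_eq, ← riemannSum_apply]; exact abs_sub_lt_of_dOmega_lt (hP P hmesh)⟩

namespace TaggedPartition

variable {a b : ℝ}

def retag (P : TaggedPartition a b) (s : ℕ → ℝ)
    (hs : ∀ i < P.n, s i ∈ Icc (P.t i) (P.t (i + 1))) : TaggedPartition a b :=
  { P with s := s, tag_mem := hs }

lemma exists_meshLT (hab : a < b) {δ : ℝ} (hδ : 0 < δ) :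
    ∃ P : TaggedPartition a b, P.MeshLT δ := by
  obtain ⟨n, hn⟩ := exists_nat_gt ((b - a) / δ)
  have hn0 : 0 < n := Nat.cast_pos.mp ((div_pos (sub_pos.2 hab) hδ).trans hn)
  have hnR : (0 : ℝ) < n := Nat.cast_pos.2 hn0
  have hh : 0 < (b - a) / n := div_pos (sub_pos.2 hab) hnR
  let t : ℕ → ℝ := fun i => a + i * ((b - a) / n)
  have ht_succ (i : ℕ) : t (i + 1) - t i = (b - a) / n := by simp only [t]; push_cast; ring
  refine ⟨⟨n, t, t, hn0, by simp [t], by simp [t]; field_simp; ring,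
    fun i _ => by linarith [ht_succ i], fun i _ => ⟨le_rfl, by linarith [ht_succ i]⟩⟩,
    fun i _ => ?_⟩
  rw [ht_succ, div_lt_iff₀ hnR]
  rw [div_lt_iff₀ hδ] at hn
  linarith

lemma finite_points (P : TaggedPartition a b) : P.points.Finite :=
  (finite_Iic P.n).image P.t

lemma mem_points_or_exists_mem_Ioo (P : TaggedPartition a b) {x : ℝ} (hx : x ∈ Icc a b) :
    x ∈ P.points ∨ ∃ i < P.n, x ∈ Ioo (P.t i) (P.t (i + 1)) := by
  suffices ∀ k ≤ P.n, x ≤ P.t k → x ∈ P.points ∨ ∃ i < k, x ∈ Ioo (P.t i) (P.t (i + 1)) from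
    this P.n le_rfl (hx.2.trans P.right.ge)
  intro k
  induction k with
  | zero =>
    intro _ hx0
    exact Or.inl ⟨0, Nat.zero_le _, le_antisymm (P.left.trans_le hx.1) hx0⟩
  | succ k ih =>
    intro hk hxk
    rcases le_or_gt x (P.t k) with hle | hlt
    · exact (ih (by omega) hle).imp_right fun ⟨i, hi, hmem⟩ => ⟨i, by omega, hmem⟩
    rcases hxk.eq_or_lt with rfl | hlt'
    · exact Or.inl ⟨k + 1, hk, rfl⟩
    · exact Or.inr ⟨k, by omega, hlt, hlt'⟩

lemma volume_le_sum_of_subset (P : TaggedPartition a b) {D : Set ℝ} (hD : D ⊆ Icc a b)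
    {I : Finset ℕ} (hI : ∀ i < P.n, (D ∩ Ioo (P.t i) (P.t (i + 1))).Nonempty → i ∈ I) :
    volume D ≤ ∑ i ∈ I, ENNReal.ofReal (P.t (i + 1) - P.t i) := by
  have hcover : D ⊆ P.points ∪ ⋃ i ∈ I, Ioo (P.t i) (P.t (i + 1)) := by
    intro x hxD
    refine (P.mem_points_or_exists_mem_Ioo (hD hxD)).imp_right fun ⟨i, hi, hxi⟩ => ?_
    exact mem_biUnion (hI i hi ⟨x, hxD, hxi⟩) hxi
  calc volume D ≤ volume (P.points ∪ ⋃ i ∈ I, Ioo (P.t i) (P.t (i + 1))) := measure_mono hcover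
    _ ≤ volume P.points + volume (⋃ i ∈ I, Ioo (P.t i) (P.t (i + 1))) := measure_union_le _ _
    _ ≤ ∑ i ∈ I, volume (Ioo (P.t i) (P.t (i + 1))) := by
      rw [P.finite_points.measure_zero, zero_add]; exact measure_biUnion_finset_le _ _
    _ = ∑ i ∈ I, ENNReal.ofReal (P.t (i + 1) - P.t i) := by simp only [Real.volume_Ioo]

lemma exists_le_riemannSum_retag_sub (f : ℝ → ℝ) (P : TaggedPartition a b) {I : Finset ℕ}
    (hI : I ⊆ range P.n) {q : ℝ}
    (hosc : ∀ i ∈ I, ∃ u ∈ Icc (P.t i) (P.t (i + 1)), ∃ v ∈ Icc (P.t i) (P.t (i + 1)),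
      q ≤ f u - f v) :
    ∃ u hu v hv, q * ∑ i ∈ I, (P.t (i + 1) - P.t i) ≤
      riemannSum f (P.retag u hu) - riemannSum f (P.retag v hv) := by
  classical
  choose! u hu v hv hq using hosc
  let u' i := if i ∈ I then u i else P.s i
  let v' i := if i ∈ I then v i else P.s i
  have hu' : ∀ i < P.n, u' i ∈ Icc (P.t i) (P.t (i + 1)) := fun i hi => by
    by_cases h : i ∈ I <;> simp [u', h, hu, P.tag_mem i hi]
  have hv' : ∀ i < P.n, v' i ∈ Icc (P.t i) (P.t (i + 1)) := fun i hi => by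
    by_cases h : i ∈ I <;> simp [v', h, hv, P.tag_mem i hi]
  refine ⟨u', hu', v', hv', ?_⟩
  have hw : ∀ i ∈ range P.n, 0 ≤ P.t (i + 1) - P.t i :=
    fun i hi => sub_nonneg.2 (P.mono i (mem_range.1 hi)).le
  calc q * ∑ i ∈ I, (P.t (i + 1) - P.t i) = ∑ i ∈ I, (P.t (i + 1) - P.t i) * q := by
        rw [mul_sum]; simp only [mul_comm]
    _ ≤ ∑ i ∈ I, (P.t (i + 1) - P.t i) * (f (u' i) - f (v' i)) :=
        sum_le_sum fun i hi => by
          simp only [u', v', hi, if_true]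
          exact mul_le_mul_of_nonneg_left (hq i hi) (hw i (hI hi))
    _ ≤ ∑ i ∈ range P.n, (P.t (i + 1) - P.t i) * (f (u' i) - f (v' i)) :=
        sum_le_sum_of_subset_of_nonneg hI fun i _ hi => by simp [u', v', hi]
    _ = riemannSum f (P.retag u' hu') - riemannSum f (P.retag v' hv') := by
        simp only [riemannSum, retag, smul_eq_mul, ← sum_sub_distrib, mul_sub]

end TaggedPartition

lemma HasRiemannIntegral.exists_dist_riemannSum_lt {X : Type*} [MetricSpace X] [AddCommGroup X]
    [Module ℝ X] {f : ℝ → X} {a b : ℝ} {x : X} (hf : HasRiemannIntegral f a b x) {ε : ℝ}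
    (hε : 0 < ε) : ∃ δ > 0, ∀ P Q : TaggedPartition a b, P.MeshLT δ → Q.MeshLT δ →
      dist (riemannSum f P) (riemannSum f Q) < ε :=
  let ⟨δ, hδ, h⟩ := hf (ε / 2) (half_pos hε)
  ⟨δ, hδ, fun P Q hP hQ => (dist_triangle_right _ _ x).trans_lt (by linarith [h P hP, h Q hQ])⟩

lemma HasRiemannIntegral.volume_oscillation_ge_eq_zero {f : ℝ → ℝ} {a b x : ℝ} (hab : a < b)
    (hf : HasRiemannIntegral f a b x) {q : ℝ} (hq : 0 < q) :
    volume {t ∈ Icc a b | ∃ᶠ s in 𝓝[Icc a b] t, q ≤ |f s - f t|} = 0 := by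
  classical
  set D := {t ∈ Icc a b | ∃ᶠ s in 𝓝[Icc a b] t, q ≤ |f s - f t|}
  have hsmall : ∀ ε > 0, volume D ≤ ENNReal.ofReal (ε / q) := by
    intro ε hε
    obtain ⟨δ, hδ, hcauchy⟩ := hf.exists_dist_riemannSum_lt hε
    obtain ⟨P, hP⟩ := TaggedPartition.exists_meshLT hab hδ
    set I := (range P.n).filter fun i => (D ∩ Ioo (P.t i) (P.t (i + 1))).Nonempty
    have hosc : ∀ i ∈ I, ∃ u ∈ Icc (P.t i) (P.t (i + 1)), ∃ v ∈ Icc (P.t i) (P.t (i + 1)),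
        q ≤ f u - f v := by
      intro i hi
      obtain ⟨-, t, ⟨-, hfreq⟩, ht⟩ := mem_filter.1 hi
      obtain ⟨s, hsq, hs⟩ := (hfreq.and_eventually
        (mem_nhdsWithin_of_mem_nhds (Ioo_mem_nhds ht.1 ht.2))).exists
      rcases le_abs.1 hsq with h | h
      · exact ⟨s, Ioo_subset_Icc_self hs, t, Ioo_subset_Icc_self ht, h⟩
      · exact ⟨t, Ioo_subset_Icc_self ht, s, Ioo_subset_Icc_self hs, by linarith⟩
    obtain ⟨u, hu, v, hv, hle⟩ :=
      P.exists_le_riemannSum_retag_sub f (filter_subset _ _) hosc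
    have hdist := hcauchy (P.retag u hu) (P.retag v hv) hP hP
    have hw : ∀ i ∈ I, 0 ≤ P.t (i + 1) - P.t i :=
      fun i hi => sub_nonneg.2 (P.mono i (mem_range.1 (mem_filter.1 hi).1)).le
    calc volume D ≤ ∑ i ∈ I, ENNReal.ofReal (P.t (i + 1) - P.t i) :=
          P.volume_le_sum_of_subset (fun t ht => ht.1)
            fun i hi hne => mem_filter.2 ⟨mem_range.2 hi, hne⟩
      _ = ENNReal.ofReal (∑ i ∈ I, (P.t (i + 1) - P.t i)) :=
          (ENNReal.ofReal_sum_of_nonneg hw).symm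
      _ ≤ ENNReal.ofReal (ε / q) := by
          refine ENNReal.ofReal_le_ofReal ((le_div_iff₀' hq).2 ?_)
          rw [Real.dist_eq] at hdist
          linarith [le_abs_self (riemannSum f (P.retag u hu) - riemannSum f (P.retag v hv))]
  refine le_antisymm (ENNReal.le_of_forall_pos_le_add fun η hη _ => ?_) bot_le
  simpa [mul_div_cancel_left₀ _ hq.ne'] using hsmall (q * η) (by positivity)

theorem HasRiemannIntegral.volume_not_continuousWithinAt_eq_zero {f : ℝ → ℝ} {a b x : ℝ}
    (hab : a < b) (hf : HasRiemannIntegral f a b x) :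
    volume {t ∈ Icc a b | ¬ContinuousWithinAt f (Icc a b) t} = 0 := by
  refine measure_mono_null ?_ (measure_iUnion_null fun n : ℕ =>
    hf.volume_oscillation_ge_eq_zero hab (Nat.one_div_pos_of_nat (n := n)))
  rintro t ⟨ht, hdisc⟩
  rw [ContinuousWithinAt, Metric.tendsto_nhds] at hdisc
  push Not at hdisc
  obtain ⟨ε, hε, hfreq⟩ := hdisc
  obtain ⟨n, hn⟩ := exists_nat_one_div_lt hε
  exact mem_iUnion.2 ⟨n, ht, hfreq.mono fun s hs => by rw [Real.dist_eq] at hs; linarith⟩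

theorem lp_in_ROmega_lebesgueProperty_general
    (a b : ℝ) (hab : a < b) (f : ℝ → ℕ → ℝ)
    (hf : ∃ x, HasRiemannIntegralD f a b x) :
    volume {t ∈ Set.Icc a b | ¬ ContinuousWithinAtD f (Set.Icc a b) t} = 0 := by
  obtain ⟨x, hx⟩ := hf
  refine measure_mono_null ?_ (measure_iUnion_null fun i =>
    (hx.hasRiemannIntegral_apply i).volume_not_continuousWithinAt_eq_zero hab)
  rintro t ⟨ht, hdisc⟩
  obtain ⟨i, hi⟩ := not_forall.1 fun hcont => hdisc <|
    continuousWithinAtD_of_continuousWithinAt (continuousWithinAt_pi.2 hcont)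
  exact mem_iUnion.2 ⟨i, ht, hi⟩

/-- `ℓᵖ` (`1 ≤ p ≤ ∞`), regarded as a subspace of `ℝ^ω` with the
metric `dOmega` of the product topology, has the Lebesgue property: any
`ℓᵖ`-valued function that is Riemann integrable for `dOmega` is `dOmega`-continuous
almost everywhere. -/
theorem lp_in_ROmega_lebesgueProperty (p : ENNReal) (hp : 1 ≤ p)
    (a b : ℝ) (hab : a < b) (f : ℝ → ℕ → ℝ)
    (hmem : ∀ t ∈ Set.Icc a b, Memℓp (f t) p)
    (hf : ∃ x, HasRiemannIntegralD f a b x) :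
    volume {t ∈ Set.Icc a b | ¬ ContinuousWithinAtD f (Set.Icc a b) t} = 0 :=
  lp_in_ROmega_lebesgueProperty_general a b hab f hf
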